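/- Let U be a finite semigroup, S a subsemigroup, x ∈ S with x' ∈ U satisfying x x' x = x. Then D_x^S ∩ H_x^U = {s x t : s ∈ Stab_S(R_x^U), t ∈ Stab_S(L_x^U)}. -/

import Mathlib

variable {U : Type*}

/-- Green's R-relation relative to a set `T` of multipliers (`T = S` gives `R^S`,
`T = Set.univ` gives `R^U`): `x R y` iff `x ∈ y T^1` and `y ∈ x T^1`. -/
def GreenR [Mul U] (T : Set U) (x y : U) : Prop :=
  (x = y ∨ ∃ a ∈ T, x * a = y) ∧ (y = x ∨ ∃ a ∈ T, y * a = x)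

/-- Green's L-relation relative to a set `T` of multipliers. -/
def GreenL [Mul U] (T : Set U) (x y : U) : Prop :=
  (x = y ∨ ∃ a ∈ T, a * x = y) ∧ (y = x ∨ ∃ a ∈ T, a * y = x)

/-- Green's H-relation relative to `T`. -/
def GreenH [Mul U] (T : Set U) (x y : U) : Prop :=
  GreenL T x y ∧ GreenR T x y

/-- Green's D-relation relative to `T` (for finite semigroups, `D = R ∘ L`). -/
def GreenD [Mul U] (T : Set U) (x y : U) : Prop :=
  ∃ z, GreenR T x z ∧ GreenL T z y

/-- The `L^U`-class of `x` in the ambient semigroup `U`. -/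
def Lcl [Mul U] (x : U) : Set U := {y | GreenL Set.univ x y}

/-- The `R^U`-class of `x` in the ambient semigroup `U`. -/
def RclU [Mul U] (x : U) : Set U := {y | GreenR Set.univ x y}

/-- The `R`-class of `x` relative to multipliers from `T`. -/
def Rcl [Mul U] (T : Set U) (x : U) : Set U := {y | GreenR T x y}

/-- `L_a^U` reaches `L_b^U` under the right action of `T^1` on `L^U`-classes
given by `L_a · s = L_{a s}`. -/
def reachC [Mul U] (T : Set U) (a b : U) : Prop :=
  Lcl a = Lcl b ∨ ∃ s ∈ T, Lcl (a * s) = Lcl b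

/-- `R_a^U` reaches `R_b^U` under the left action of `T^1` on `R^U`-classes. -/
def reachCL [Mul U] (T : Set U) (a b : U) : Prop :=
  RclU a = RclU b ∨ ∃ s ∈ T, RclU (s * a) = RclU b

/-- The right action of `S^1` (identity adjoined, encoded as `Option ↥S`) on `U`. -/
def act1 [Mul U] (S : Subsemigroup U) (u : U) (o : Option ↥S) : U :=
  o.elim u (fun s => u * (s : U))

/-- The left action of `S^1` on `U`. -/
def act1L [Mul U] (S : Subsemigroup U) (o : Option ↥S) (u : U) : U :=
  o.elim u (fun s => (s : U) * u)

/-- The stabiliser `Stab_S(L_x^U)` of the `L^U`-class of `x` under the right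
action of `S^1` on subsets of `U`. -/
def StabOfL [Mul U] (S : Subsemigroup U) (x : U) : Set (Option ↥S) :=
  {o | (fun y => act1 S y o) '' Lcl x = Lcl x}

/-- The stabiliser `Stab_S(R_x^U)` of the `R^U`-class of `x` under the left
action of `S^1` on subsets of `U`. -/
def StabOfR [Mul U] (S : Subsemigroup U) (x : U) : Set (Option ↥S) :=
  {o | (fun y => act1L S o y) '' RclU x = RclU x}


/-!
If `x R^S z L^S w` with `z = x a` and `x = z b`, Green's lemma says that right translation by `a`
maps `L_x^U` onto `L_{xa}^U = L_z^U`, which is `L_x^U` because `w H^U x`; so `a` stabilises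
`L_x^U`, and dually `w = c z` with `c` stabilising `R_x^U`.
Conversely, an element of `S` stabilising `L_x^U` permutes this finite set, so some power of it
acts on it as the identity; hence `y R^S y t` for every `y ∈ L_x^U`, and dually `y L^S s y` for
`y ∈ R_x^U`, which places `s x t` in `D_x^S ∩ H_x^U`.
-/

open Function Set

section Mul

variable [Mul U] {T : Set U} {x y : U}

theorem GreenL.symm (h : GreenL T x y) : GreenL T y x := ⟨h.2, h.1⟩

theorem GreenR.symm (h : GreenR T x y) : GreenR T y x := ⟨h.2, h.1⟩

theorem GreenL.mono {T' : Set U} (hT : T ⊆ T') (h : GreenL T x y) : GreenL T' x y :=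
  ⟨h.1.imp_right fun ⟨a, ha, e⟩ => ⟨a, hT ha, e⟩,
    h.2.imp_right fun ⟨a, ha, e⟩ => ⟨a, hT ha, e⟩⟩

theorem GreenR.mono {T' : Set U} (hT : T ⊆ T') (h : GreenR T x y) : GreenR T' x y :=
  ⟨h.1.imp_right fun ⟨a, ha, e⟩ => ⟨a, hT ha, e⟩,
    h.2.imp_right fun ⟨a, ha, e⟩ => ⟨a, hT ha, e⟩⟩

theorem StabOfR_congr (S : Subsemigroup U) (h : RclU x = RclU y) : StabOfR S x = StabOfR S y := by
  rw [StabOfR, StabOfR, h]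

end Mul

theorem mem_periodicPts_of_image_eq {α : Type*} [Finite α] {f : α → α} {A : Set α}
    (h : f '' A = A) {y : α} (hy : y ∈ A) : y ∈ periodicPts f := by
  have hm : MapsTo f A A := by simpa only [h] using mapsTo_image f A
  have hinj : Injective (hm.restrict f A A) :=
    Finite.injective_iff_surjective.mpr <| hm.restrict_surjective_iff.mpr <| by
      simpa only [h] using surjOn_image f A
  obtain ⟨n, hn, hper⟩ := mem_periodicPts.mp (hinj.mem_periodicPts ⟨y, hy⟩)
  exact mk_mem_periodicPts hn <|
    (hm.coe_iterate_restrict ⟨y, hy⟩ n).symm.trans (congrArg Subtype.val hper)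

section Semigroup

variable [Semigroup U] {S : Subsemigroup U} {T : Set U} {x y z : U}

theorem GreenL.trans (hxy : GreenL S x y) (hyz : GreenL S y z) : GreenL S x z := by
  have step : ∀ {p q r : U}, (p = q ∨ ∃ a ∈ S, a * p = q) →
      (q = r ∨ ∃ a ∈ S, a * q = r) → (p = r ∨ ∃ a ∈ S, a * p = r) := by
    rintro p q r (rfl | ⟨a, ha, rfl⟩) (rfl | ⟨b, hb, rfl⟩)
    exacts [Or.inl rfl, Or.inr ⟨b, hb, rfl⟩, Or.inr ⟨a, ha, rfl⟩,
      Or.inr ⟨b * a, S.mul_mem hb ha, mul_assoc b a p⟩]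
  exact ⟨step hxy.1 hyz.1, step hyz.2 hxy.2⟩

theorem GreenR.trans (hxy : GreenR S x y) (hyz : GreenR S y z) : GreenR S x z := by
  have step : ∀ {p q r : U}, (p = q ∨ ∃ a ∈ S, p * a = q) →
      (q = r ∨ ∃ a ∈ S, q * a = r) → (p = r ∨ ∃ a ∈ S, p * a = r) := by
    rintro p q r (rfl | ⟨a, ha, rfl⟩) (rfl | ⟨b, hb, rfl⟩)
    exacts [Or.inl rfl, Or.inr ⟨b, hb, rfl⟩, Or.inr ⟨a, ha, rfl⟩,
      Or.inr ⟨a * b, S.mul_mem ha hb, (mul_assoc p a b).symm⟩]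
  exact ⟨step hxy.1 hyz.1, step hyz.2 hxy.2⟩

theorem Lcl_eq_of_greenL (h : GreenL Set.univ x y) : Lcl x = Lcl y :=
  Set.ext fun _ => ⟨GreenL.trans (S := ⊤) h.symm, GreenL.trans (S := ⊤) h⟩

theorem RclU_eq_of_greenR (h : GreenR Set.univ x y) : RclU x = RclU y :=
  Set.ext fun _ => ⟨GreenR.trans (S := ⊤) h.symm, GreenR.trans (S := ⊤) h⟩

theorem GreenL.mul_right (h : GreenL T x y) (a : U) : GreenL T (x * a) (y * a) :=
  ⟨h.1.imp (congrArg (· * a)) fun ⟨b, hb, e⟩ => ⟨b, hb, by rw [← mul_assoc, e]⟩,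
    h.2.imp (congrArg (· * a)) fun ⟨b, hb, e⟩ => ⟨b, hb, by rw [← mul_assoc, e]⟩⟩

theorem GreenR.mul_left (h : GreenR T x y) (a : U) : GreenR T (a * x) (a * y) :=
  ⟨h.1.imp (congrArg (a * ·)) fun ⟨b, hb, e⟩ => ⟨b, hb, by rw [mul_assoc, e]⟩,
    h.2.imp (congrArg (a * ·)) fun ⟨b, hb, e⟩ => ⟨b, hb, by rw [mul_assoc, e]⟩⟩

theorem GreenL.mul_right_eq_self {c : U} (h : GreenL T x y) (hc : x * c = x) : y * c = y := by
  rcases h.1 with rfl | ⟨a, -, rfl⟩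
  exacts [hc, by rw [mul_assoc, hc]]

theorem GreenR.mul_left_eq_self {c : U} (h : GreenR T x y) (hc : c * x = x) : c * y = y := by
  rcases h.1 with rfl | ⟨a, -, rfl⟩
  exacts [hc, by rw [← mul_assoc, hc]]

theorem image_mul_right_Lcl {a b : U} (h : x * a * b = x) : (· * a) '' Lcl x = Lcl (x * a) := by
  ext z
  refine ⟨fun ⟨y, hy, hyz⟩ => hyz ▸ GreenL.mul_right hy a, fun hz => ⟨z * b, ?_, ?_⟩⟩
  · exact h ▸ GreenL.mul_right hz b
  · simpa only [mul_assoc] using hz.mul_right_eq_self (c := b * a) (by rw [← mul_assoc, h])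

theorem image_mul_left_RclU {a b : U} (h : b * (a * x) = x) :
    (a * ·) '' RclU x = RclU (a * x) := by
  ext z
  refine ⟨fun ⟨y, hy, hyz⟩ => hyz ▸ GreenR.mul_left hy a, fun hz => ⟨b * z, ?_, ?_⟩⟩
  · exact h ▸ GreenR.mul_left hz b
  · simpa only [mul_assoc] using hz.mul_left_eq_self (c := a * b) (by rw [mul_assoc, h])

theorem exists_mem_iterate_mul_right {a : U} (ha : a ∈ S) (y : U) :
    ∀ k, ∃ b ∈ S, (· * a)^[k + 1] y = y * b
  | 0 => ⟨a, ha, rfl⟩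
  | k + 1 =>
    let ⟨b, hb, e⟩ := exists_mem_iterate_mul_right ha y k
    ⟨b * a, S.mul_mem hb ha, by rw [iterate_succ_apply', e, mul_assoc]⟩

theorem exists_mem_iterate_mul_left {a : U} (ha : a ∈ S) (y : U) :
    ∀ k, ∃ b ∈ S, (a * ·)^[k + 1] y = b * y
  | 0 => ⟨a, ha, rfl⟩
  | k + 1 =>
    let ⟨b, hb, e⟩ := exists_mem_iterate_mul_left ha y k
    ⟨a * b, S.mul_mem ha hb, by rw [iterate_succ_apply', e, mul_assoc]⟩

theorem greenR_mul_right_of_mem_periodicPts {a : U} (ha : a ∈ S)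
    (hy : y ∈ periodicPts (· * a)) : GreenR S y (y * a) := by
  obtain ⟨n, hn, hper⟩ := mem_periodicPts.mp hy
  refine ⟨Or.inr ⟨a, ha, rfl⟩, ?_⟩
  obtain _ | _ | k := n
  · exact absurd hn (lt_irrefl 0)
  · exact Or.inl hper
  · obtain ⟨b, hb, e⟩ := exists_mem_iterate_mul_right ha (y * a) k
    exact Or.inr ⟨b, hb, e.symm.trans hper⟩

theorem greenL_mul_left_of_mem_periodicPts {a : U} (ha : a ∈ S)
    (hy : y ∈ periodicPts (a * ·)) : GreenL S y (a * y) := by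
  obtain ⟨n, hn, hper⟩ := mem_periodicPts.mp hy
  refine ⟨Or.inr ⟨a, ha, rfl⟩, ?_⟩
  obtain _ | _ | k := n
  · exact absurd hn (lt_irrefl 0)
  · exact Or.inl hper
  · obtain ⟨b, hb, e⟩ := exists_mem_iterate_mul_left ha (a * y) k
    exact Or.inr ⟨b, hb, e.symm.trans hper⟩

theorem act1_act1L (S : Subsemigroup U) (s t : Option S) (x : U) :
    act1 S (act1L S s x) t = act1L S s (act1 S x t) := by
  cases s <;> cases t <;> simp [act1, act1L, mul_assoc]

variable {s t : Option S}

theorem act1_mem_Lcl_of_mem_StabOfL (ht : t ∈ StabOfL S x) (hy : y ∈ Lcl x) :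
    act1 S y t ∈ Lcl x := by
  rw [← ht]
  exact mem_image_of_mem _ hy

theorem act1L_mem_RclU_of_mem_StabOfR (hs : s ∈ StabOfR S x) (hy : y ∈ RclU x) :
    act1L S s y ∈ RclU x := by
  rw [← hs]
  exact mem_image_of_mem _ hy

theorem greenR_act1_of_mem_StabOfL [Finite U] (ht : t ∈ StabOfL S x) (hy : y ∈ Lcl x) :
    GreenR S y (act1 S y t) := by
  cases t with
  | none => exact ⟨Or.inl rfl, Or.inl rfl⟩
  | some a => exact greenR_mul_right_of_mem_periodicPts a.2 (mem_periodicPts_of_image_eq ht hy)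

theorem greenL_act1L_of_mem_StabOfR [Finite U] (hs : s ∈ StabOfR S x) (hy : y ∈ RclU x) :
    GreenL S y (act1L S s y) := by
  cases s with
  | none => exact ⟨Or.inl rfl, Or.inl rfl⟩
  | some a => exact greenL_mul_left_of_mem_periodicPts a.2 (mem_periodicPts_of_image_eq hs hy)

theorem exists_mem_StabOfL_of_greenR (hxz : GreenR S x z) (hL : Lcl z = Lcl x) :
    ∃ t ∈ StabOfL S x, z = act1 S x t := by
  rcases hxz with ⟨rfl | ⟨a, ha, rfl⟩, h⟩
  · exact ⟨none, image_id' _, rfl⟩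
  · rcases h with h | ⟨b, -, hb⟩
    · exact ⟨none, image_id' _, h⟩
    · exact ⟨some ⟨a, ha⟩, (image_mul_right_Lcl hb).trans hL, rfl⟩

theorem exists_mem_StabOfR_of_greenL (hzx : GreenL S z x) (hR : RclU x = RclU z) :
    ∃ s ∈ StabOfR S z, x = act1L S s z := by
  rcases hzx with ⟨rfl | ⟨a, ha, rfl⟩, h⟩
  · exact ⟨none, image_id' _, rfl⟩
  · rcases h with h | ⟨b, -, hb⟩
    · exact ⟨none, image_id' _, h⟩
    · exact ⟨some ⟨a, ha⟩, (image_mul_left_RclU hb).trans hR, rfl⟩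

end Semigroup

theorem dclass_inter_hclassU_eq_general [Semigroup U] [Finite U] (S : Subsemigroup U)
    (x : U) :
    {w | GreenD (S : Set U) x w ∧ GreenH (Set.univ : Set U) x w} =
      {w | ∃ s ∈ StabOfR S x, ∃ t ∈ StabOfL S x, w = act1 S (act1L S s x) t} := by
  ext w
  constructor
  · rintro ⟨⟨z, hxz, hzw⟩, hxwL, hxwR⟩
    have hxzR : RclU x = RclU z := RclU_eq_of_greenR (hxz.mono (subset_univ _))
    obtain ⟨t, ht, rfl⟩ := exists_mem_StabOfL_of_greenR hxz
      ((Lcl_eq_of_greenL (hzw.mono (subset_univ _))).trans (Lcl_eq_of_greenL hxwL).symm)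
    obtain ⟨s, hs, rfl⟩ := exists_mem_StabOfR_of_greenL hzw
      ((RclU_eq_of_greenR hxwR).symm.trans hxzR)
    exact ⟨s, StabOfR_congr S hxzR ▸ hs, t, ht, (act1_act1L S s t x).symm⟩
  · rintro ⟨s, hs, t, ht, rfl⟩
    have hxx : GreenH Set.univ x x := ⟨⟨Or.inl rfl, Or.inl rfl⟩, ⟨Or.inl rfl, Or.inl rfl⟩⟩
    have hxz : GreenR S x (act1 S x t) := greenR_act1_of_mem_StabOfL ht hxx.1
    have hzw := greenL_act1L_of_mem_StabOfR hs (hxz.mono (subset_univ _))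
    have hsxL : act1L S s x ∈ Lcl x :=
      (greenL_act1L_of_mem_StabOfR hs hxx.2).mono (subset_univ _)
    have hwL := act1_mem_Lcl_of_mem_StabOfL ht hsxL
    have hwR := act1L_mem_RclU_of_mem_StabOfR hs (hxz.mono (subset_univ _))
    rw [← act1_act1L] at hzw hwR
    exact ⟨⟨_, hxz, hzw⟩, hwL, hwR⟩

/-- If `x ∈ S` and `x' ∈ U` satisfies `x x' x = x`, then
`D_x^S ∩ H_x^U = {s x t : s ∈ Stab_S(R_x^U), t ∈ Stab_S(L_x^U)}`. -/
theorem dclass_inter_hclassU_eq [Semigroup U] [Finite U] (S : Subsemigroup U)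
    (x : U) (hx : x ∈ S) (x' : U) (hx' : x * x' * x = x) :
    {w | GreenD (S : Set U) x w ∧ GreenH (Set.univ : Set U) x w} =
      {w | ∃ s ∈ StabOfR S x, ∃ t ∈ StabOfL S x, w = act1 S (act1L S s x) t} :=
  dclass_inter_hclassU_eq_general S x
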